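/- Let m^1, m^2 be probability measures on C_T with ∫ sup_{t≤T}(|c_t|^4 + ‖w_t‖^4) dm^i < ∞ for i = 1,2, and let (c^1, w^1) and (c^2, w^2) be solutions of the frozen system with inputs m^1 and m^2 respectively, driven by the same initial condition (c_0, w_0) distributed as μ̄_0. Then there exists a constant C < ∞ such that for all t ∈ [0,T], almost surely: |c_t^2 − c_t^1| ≤ C ∫_0^t [ ‖w_s^2 − w_s^1‖ + D_{s,4}(m^1, m^2) ] ds. -/

import Mathlib

open MeasureTheory ProbabilityTheory Filter
open scoped ENNReal RealInnerProductSpace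

noncomputable section

/-- Euclidean space `ℝ^d`. -/
abbrev Euc (d : ℕ) := EuclideanSpace ℝ (Fin d)

/-- The path space `C_T = C([0,T]; ℝ × ℝ^d)`. -/
abbrev PathSpace (d : ℕ) (T : ℝ) := C(Set.Icc (0:ℝ) T, ℝ × Euc d)

/-- Borel measurable structure on the path space. -/
instance (d : ℕ) (T : ℝ) : MeasurableSpace (PathSpace d T) := borel _

/-- Evaluation of a path at time `s ∈ ℝ` (clamped to `[0,T]`). -/
def evalPath {d : ℕ} {T : ℝ} (hT : 0 ≤ T) (γ : PathSpace d T) (s : ℝ) : ℝ × Euc d :=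
  γ (Set.projIcc 0 T hT s)

/-- `⟨G_{s,x}, m⟩ = ∫ c'_s σ(w'_s · x) m(d(c',w'))`. -/
def Gpair {d : ℕ} {T : ℝ} (hT : 0 ≤ T) (σ : ℝ → ℝ) (m : Measure (PathSpace d T))
    (s : ℝ) (x : Euc d) : ℝ :=
  ∫ γ, (evalPath hT γ s).1 * σ (⟪(evalPath hT γ s).2, x⟫) ∂m

/-- The `p`-th power of the `ℓ^p` norm on `ℝ^{1+d}`. -/
def lpPow {d : ℕ} (p : ℝ) (z : ℝ × Euc d) : ℝ := |z.1| ^ p + ∑ j, |z.2 j| ^ p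

/-- The Wasserstein-type metric `D_{t,p}` on probability measures on path space. -/
def Dpath {d : ℕ} {T : ℝ} (hT : 0 ≤ T) (t p : ℝ)
    (m m' : Measure (PathSpace d T)) : ℝ :=
  sInf { r | ∃ ν : Measure (PathSpace d T × PathSpace d T), IsProbabilityMeasure ν ∧
    ν.map Prod.fst = m ∧ ν.map Prod.snd = m' ∧
    r = (∫ γ, min (⨆ s : Set.Icc (0:ℝ) t,
          lpPow p (evalPath hT γ.1 s - evalPath hT γ.2 s)) 1 ∂ν) ^ (1 / p) }

/-- A random continuous path `ξ` solves the frozen system with input measure `m`. -/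
def IsFrozenSolution {d : ℕ} {T : ℝ} (hT : 0 ≤ T) (α : ℝ) (σ : ℝ → ℝ)
    (π : Measure (Euc d × ℝ)) (μ0 : Measure (ℝ × Euc d))
    {Ω : Type} [MeasureSpace Ω]
    (m : Measure (PathSpace d T)) (ξ : Ω → PathSpace d T) : Prop :=
  Measurable ξ ∧
  Measure.map (fun ω => evalPath hT (ξ ω) 0) ℙ = μ0 ∧
  ∀ ω, ∀ t ∈ Set.Icc (0:ℝ) T,
    ((evalPath hT (ξ ω) t).1 = (evalPath hT (ξ ω) 0).1
      + (∫ s in (0:ℝ)..t, ∫ pt, α * (pt.2 - Gpair hT σ m s pt.1)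
          * σ (⟪(evalPath hT (ξ ω) s).2, pt.1⟫) ∂π)) ∧
    ((evalPath hT (ξ ω) t).2 = (evalPath hT (ξ ω) 0).2
      + ∫ s in (0:ℝ)..t, ∫ pt, (α * (pt.2 - Gpair hT σ m s pt.1)
          * (evalPath hT (ξ ω) s).1 * deriv σ (⟪(evalPath hT (ξ ω) s).2, pt.1⟫)) • pt.1 ∂π)

end

/-!
The `c`-equations of the two solutions start from the same value, so `c²_t - c¹_t` is the integral
of the difference of the drifts. As `σ` is bounded and Lipschitz, that difference at time `s` is
at most `(1 + |y|)(1 + ‖x‖)` times `‖w²_s - w¹_s‖ + |⟨G_{s,x}, m¹⟩ - ⟨G_{s,x}, m²⟩|`, integrated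
against `π`. The second term is an integral over any coupling `ν` of `m¹` and `m²`, whose integrand
is at most `(1 + ‖x‖)(1 + |c¹_s| + |c²_s|)` times the fourth root of the truncated distance
`min(sup_{u ≤ s} ‖γ¹_u - γ²_u‖₄⁴, 1)`. Hölder's inequality with exponents `4` and `4/3` and the
fourth moments of `m¹, m²` turn this into `K (1 + ‖x‖) (∫ min(…, 1) dν)^{1/4}`, and the infimum
over couplings into `K (1 + ‖x‖) D_{s,4}(m¹, m²)`.
-/

namespace FrozenSystem

open Set

noncomputable section

section General

variable {X : Type*} [MeasurableSpace X] {μ : Measure X}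

lemma abs_sub_le_of_abs_deriv_le {f : ℝ → ℝ} {C : ℝ} (hf : Differentiable ℝ f)
    (hC : ∀ z, |deriv f z| ≤ C) (a b : ℝ) : |f a - f b| ≤ C * |a - b| := by
  simpa using convex_univ.norm_image_sub_le_of_norm_deriv_le (fun x _ => hf x)
    (fun x _ => by simpa using hC x) (mem_univ b) (mem_univ a)

lemma abs_comp_inner_sub_le {E : Type*} [NormedAddCommGroup E] [InnerProductSpace ℝ E]
    {f : ℝ → ℝ} {C : ℝ} (hf : Differentiable ℝ f) (hC : ∀ z, |deriv f z| ≤ C) (w₁ w₂ x : E) :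
    |f ⟪w₁, x⟫ - f ⟪w₂, x⟫| ≤ C * (‖w₁ - w₂‖ * ‖x‖) := by
  refine (abs_sub_le_of_abs_deriv_le hf hC _ _).trans
    (mul_le_mul_of_nonneg_left ?_ ((abs_nonneg _).trans (hC 0)))
  rw [← inner_sub_left]
  exact abs_real_inner_le_norm _ _

lemma continuous_iSup_of_compactSpace {X K : Type*} [TopologicalSpace X] [TopologicalSpace K]
    [CompactSpace K] {F : X → K → ℝ} (hF : Continuous ↿F) :
    Continuous fun x => ⨆ u, F x u := by
  have := isCompact_univ.continuous_sSup hF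
  simp only [image_univ] at this
  exact this

lemma abs_intervalIntegral_sub_le {f g b : ℝ → ℝ} {C t₀ t : ℝ} (ht : t₀ ≤ t)
    (hf : IntervalIntegrable f volume t₀ t) (hg : IntervalIntegrable g volume t₀ t)
    (hb : IntervalIntegrable b volume t₀ t) (h : ∀ s ∈ Icc t₀ t, |f s - g s| ≤ C * b s) :
    |(∫ s in t₀..t, f s) - ∫ s in t₀..t, g s| ≤ C * ∫ s in t₀..t, b s := by
  rw [← intervalIntegral.integral_sub hf hg, ← intervalIntegral.integral_const_mul]
  exact (intervalIntegral.abs_integral_le_integral_abs ht).trans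
    (intervalIntegral.integral_mono_on ht (hf.sub hg).abs (hb.const_mul C) h)

lemma le_rpow_quarter_of_pow_four_le {a b : ℝ} (ha : 0 ≤ a) (h : a ^ 4 ≤ b) :
    a ≤ b ^ (1 / 4 : ℝ) := by
  rw [one_div, Real.le_rpow_inv_iff_of_pos ha ((pow_nonneg ha 4).trans h) (by norm_num)]
  exact_mod_cast h

lemma integral_mul_le_sqrt_mul_sqrt {f g : X → ℝ} (hf0 : 0 ≤ᵐ[μ] f) (hg0 : 0 ≤ᵐ[μ] g)
    (hf : MemLp f 2 μ) (hg : MemLp g 2 μ) :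
    ∫ a, f a * g a ∂μ ≤ √(∫ a, f a ^ 2 ∂μ) * √(∫ a, g a ^ 2 ∂μ) := by
  have := integral_mul_le_Lp_mul_Lq_of_nonneg Real.HolderConjugate.two_two hf0 hg0
    (by simpa using hf) (by simpa using hg)
  simpa only [Real.sqrt_eq_rpow, Real.rpow_two, one_div] using this

/-- A form of Hölder's inequality with exponents `4` and `4/3`. -/
lemma integral_rpow_quarter_mul_le [IsProbabilityMeasure μ] {e h : X → ℝ} (he0 : 0 ≤ e)
    (he : Integrable e μ) (hh0 : 0 ≤ h) (hh : MemLp h 2 μ) :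
    ∫ a, e a ^ (1 / 4 : ℝ) * h a ∂μ ≤ (∫ a, e a ∂μ) ^ (1 / 4 : ℝ) * √(∫ a, h a ^ 2 ∂μ) := by
  have hsq : ∀ a, (e a ^ (1 / 4 : ℝ)) ^ 2 = √(e a) := fun a => by
    rw [← Real.rpow_natCast, ← Real.rpow_mul (he0 a), Real.sqrt_eq_rpow]; norm_num
  have hsqrt : Integrable (fun a => √(e a)) μ :=
    (integrable_const 1 |>.add he).mono'
      he.aestronglyMeasurable.aemeasurable.sqrt.aestronglyMeasurable
      (ae_of_all _ fun a => by
        rw [Real.norm_of_nonneg (Real.sqrt_nonneg _), Pi.add_apply]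
        nlinarith [Real.sq_sqrt (he0 a), Real.sqrt_nonneg (e a)])
  have hq : MemLp (fun a => e a ^ (1 / 4 : ℝ)) 2 μ := by
    refine (memLp_two_iff_integrable_sq ?_).2 (by simpa only [hsq] using hsqrt)
    exact (he.aestronglyMeasurable.aemeasurable.pow_const _).aestronglyMeasurable
  have hcs₁ := integral_mul_le_sqrt_mul_sqrt (ae_of_all _ fun a => Real.rpow_nonneg (he0 a) _)
    (ae_of_all _ hh0) hq hh
  have hcs₂ := integral_mul_le_sqrt_mul_sqrt (ae_of_all _ fun a => Real.sqrt_nonneg (e a))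
    (ae_of_all _ fun _ => zero_le_one) (f := fun a => √(e a)) (g := fun _ => (1 : ℝ))
    ((memLp_two_iff_integrable_sq hsqrt.aestronglyMeasurable).2
      (he.congr (ae_of_all _ fun a => (Real.sq_sqrt (he0 a)).symm)))
    (memLp_const 1)
  simp only [mul_one, one_pow, integral_const, probReal_univ, smul_eq_mul, Real.sqrt_one,
    Real.sq_sqrt (he0 _)] at hcs₂
  simp only [hsq] at hcs₁
  refine hcs₁.trans (mul_le_mul_of_nonneg_right ?_ (Real.sqrt_nonneg _))
  calc √(∫ a, √(e a) ∂μ) ≤ √√(∫ a, e a ∂μ) := Real.sqrt_le_sqrt hcs₂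
    _ = (∫ a, e a ∂μ) ^ (1 / 4 : ℝ) := by
      rw [Real.sqrt_eq_rpow, Real.sqrt_eq_rpow, ← Real.rpow_mul (integral_nonneg he0)]; norm_num

variable {Y : Type*} [MeasurableSpace Y] {m : Measure Y} {φ : X → Y} {f : Y → ℝ}

lemma integrable_comp_of_map_eq (hφ : Measurable φ) (h : μ.map φ = m) (hf : Integrable f m) :
    Integrable (fun x => f (φ x)) μ :=
  (h ▸ hf).comp_measurable hφ

lemma integral_comp_of_map_eq (hφ : Measurable φ) (h : μ.map φ = m)
    (hf : AEStronglyMeasurable f m) : ∫ x, f (φ x) ∂μ = ∫ y, f y ∂m := by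
  subst h
  exact (integral_map hφ.aemeasurable hf).symm

end General

variable {d : ℕ} {T : ℝ}

instance : BorelSpace (PathSpace d T) := ⟨rfl⟩

lemma continuous_evalPath (hT : 0 ≤ T) :
    Continuous fun p : PathSpace d T × ℝ => evalPath hT p.1 p.2 :=
  continuous_eval.comp (continuous_fst.prodMk ((continuous_projIcc (h := hT)).comp continuous_snd))

lemma continuous_evalPath_left (hT : 0 ≤ T) (s : ℝ) :
    Continuous fun γ : PathSpace d T => evalPath hT γ s :=
  continuous_eval_const _

lemma continuous_evalPath_right (hT : 0 ≤ T) (γ : PathSpace d T) :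
    Continuous (evalPath hT γ) :=
  γ.continuous.comp continuous_projIcc

lemma evalPath_projIcc (hT : 0 ≤ T) (γ : PathSpace d T) (s : ℝ) :
    evalPath hT γ (projIcc 0 T hT s) = evalPath hT γ s := by
  simp [evalPath]

def supMoment4 (hT : 0 ≤ T) (γ : PathSpace d T) : ℝ :=
  ⨆ t : Icc (0:ℝ) T, (|(evalPath hT γ t).1| ^ 4 + ‖(evalPath hT γ t).2‖ ^ 4)

lemma supMoment4_nonneg (hT : 0 ≤ T) (γ : PathSpace d T) : 0 ≤ supMoment4 hT γ :=
  Real.iSup_nonneg fun _ => by positivity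

lemma abs_pow_four_le_supMoment4 (hT : 0 ≤ T) (γ : PathSpace d T) (s : ℝ) :
    |(evalPath hT γ s).1| ^ 4 ≤ supMoment4 hT γ := by
  have hc : Continuous fun t : Icc (0:ℝ) T =>
      |(evalPath hT γ t).1| ^ 4 + ‖(evalPath hT γ t).2‖ ^ 4 := by
    have : Continuous fun t : Icc (0:ℝ) T => evalPath hT γ t :=
      (continuous_evalPath_right hT γ).comp continuous_subtype_val
    fun_prop
  calc |(evalPath hT γ s).1| ^ 4
      ≤ |(evalPath hT γ s).1| ^ 4 + ‖(evalPath hT γ s).2‖ ^ 4 := by simp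
    _ ≤ supMoment4 hT γ := by
      rw [← evalPath_projIcc]
      exact le_ciSup (isCompact_range hc).bddAbove (projIcc 0 T hT s)

lemma abs_le_one_add_supMoment4 (hT : 0 ≤ T) (γ : PathSpace d T) (s : ℝ) :
    |(evalPath hT γ s).1| ≤ 1 + supMoment4 hT γ := by
  have := abs_pow_four_le_supMoment4 hT γ s
  nlinarith [abs_nonneg (evalPath hT γ s).1, sq_nonneg (|(evalPath hT γ s).1| ^ 2 - 1),
    sq_nonneg (|(evalPath hT γ s).1| - 1)]

lemma sq_le_one_add_supMoment4 (hT : 0 ≤ T) (γ : PathSpace d T) (s : ℝ) :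
    (evalPath hT γ s).1 ^ 2 ≤ 1 + supMoment4 hT γ := by
  have := abs_pow_four_le_supMoment4 hT γ s
  rw [← sq_abs]
  nlinarith [sq_nonneg (|(evalPath hT γ s).1| ^ 2 - 1)]

def cWeight (hT : 0 ≤ T) (s : ℝ) (γ : PathSpace d T × PathSpace d T) : ℝ :=
  1 + |(evalPath hT γ.1 s).1| + |(evalPath hT γ.2 s).1|

lemma sq_cWeight_le (hT : 0 ≤ T) (s : ℝ) (γ : PathSpace d T × PathSpace d T) :
    cWeight hT s γ ^ 2 ≤ 9 + 3 * supMoment4 hT γ.1 + 3 * supMoment4 hT γ.2 := by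
  have h₁ := sq_le_one_add_supMoment4 hT γ.1 s
  have h₂ := sq_le_one_add_supMoment4 hT γ.2 s
  rw [← sq_abs] at h₁ h₂
  unfold cWeight
  nlinarith [sq_nonneg (|(evalPath hT γ.1 s).1| - |(evalPath hT γ.2 s).1|),
    sq_nonneg (|(evalPath hT γ.1 s).1| - 1), sq_nonneg (|(evalPath hT γ.2 s).1| - 1)]

lemma integrable_supMoment4_bound (hT : 0 ≤ T) {m₁ m₂ : Measure (PathSpace d T)}
    (hm₁ : Integrable (supMoment4 hT) m₁) (hm₂ : Integrable (supMoment4 hT) m₂)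
    {ν : Measure (PathSpace d T × PathSpace d T)} [IsFiniteMeasure ν]
    (h₁ : ν.map Prod.fst = m₁) (h₂ : ν.map Prod.snd = m₂) :
    Integrable (fun γ => 9 + 3 * supMoment4 hT γ.1 + 3 * supMoment4 hT γ.2) ν :=
  ((integrable_const 9).add ((integrable_comp_of_map_eq measurable_fst h₁ hm₁).const_mul 3)).add
    ((integrable_comp_of_map_eq measurable_snd h₂ hm₂).const_mul 3)

lemma lpPow_nonneg (p : ℝ) (z : ℝ × Euc d) : 0 ≤ lpPow p z :=
  add_nonneg (Real.rpow_nonneg (abs_nonneg _) _)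
    (Finset.sum_nonneg fun _ _ => Real.rpow_nonneg (abs_nonneg _) _)

lemma continuous_lpPow {p : ℝ} (hp : 0 ≤ p) : Continuous (lpPow (d := d) p) := by
  unfold lpPow
  fun_prop (disch := exact fun _ => Or.inr hp)

lemma lpPow_four (z : ℝ × Euc d) : lpPow 4 z = |z.1| ^ 4 + ∑ j, |z.2 j| ^ 4 := by
  simp only [lpPow, ← Real.rpow_natCast]
  norm_num

lemma abs_fst_pow_four_le_lpPow (z : ℝ × Euc d) : |z.1| ^ 4 ≤ lpPow 4 z := by
  rw [lpPow_four]
  exact le_add_of_nonneg_right (Finset.sum_nonneg fun _ _ => by positivity)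

lemma norm_snd_pow_four_le_lpPow (z : ℝ × Euc d) : ‖z.2‖ ^ 4 ≤ d * lpPow 4 z := by
  have hcs := sq_sum_le_card_mul_sum_sq (s := Finset.univ) (f := fun j => |z.2 j| ^ 2)
  simp only [Finset.card_univ, Fintype.card_fin, ← pow_mul] at hcs
  simp only [sq_abs] at hcs
  calc ‖z.2‖ ^ 4 = (∑ j, z.2 j ^ 2) ^ 2 := by
        rw [show (4 : ℕ) = 2 * 2 from rfl, pow_mul, EuclideanSpace.norm_sq_eq]
        simp only [Real.norm_eq_abs, sq_abs]
    _ ≤ d * ∑ j, |z.2 j| ^ 4 := hcs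
    _ ≤ d * lpPow 4 z := by
      rw [lpPow_four]
      exact mul_le_mul_of_nonneg_left (le_add_of_nonneg_left (by positivity)) (by positivity)

def supLpPow4 (hT : 0 ≤ T) (t : ℝ) (γ : PathSpace d T × PathSpace d T) : ℝ :=
  ⨆ u : Icc (0:ℝ) t, lpPow 4 (evalPath hT γ.1 u - evalPath hT γ.2 u)

lemma supLpPow4_nonneg (hT : 0 ≤ T) (t : ℝ) (γ : PathSpace d T × PathSpace d T) :
    0 ≤ supLpPow4 hT t γ :=
  Real.iSup_nonneg fun _ => lpPow_nonneg _ _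

lemma continuous_lpPow_sub_evalPath (hT : 0 ≤ T) {X : Type*} [TopologicalSpace X]
    {f : X → PathSpace d T × PathSpace d T} {g : X → ℝ} (hf : Continuous f) (hg : Continuous g) :
    Continuous fun x => lpPow 4 (evalPath hT (f x).1 (g x) - evalPath hT (f x).2 (g x)) :=
  (continuous_lpPow (by norm_num)).comp <|
    ((continuous_evalPath hT).comp ((continuous_fst.comp hf).prodMk hg)).sub
      ((continuous_evalPath hT).comp ((continuous_snd.comp hf).prodMk hg))

lemma continuous_supLpPow4 (hT : 0 ≤ T) (t : ℝ) : Continuous (supLpPow4 (d := d) hT t) :=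
  continuous_iSup_of_compactSpace <|
    continuous_lpPow_sub_evalPath hT continuous_fst (continuous_subtype_val.comp continuous_snd)

lemma le_supLpPow4 (hT : 0 ≤ T) {t u : ℝ} (hu : u ∈ Icc 0 t)
    (γ : PathSpace d T × PathSpace d T) :
    lpPow 4 (evalPath hT γ.1 u - evalPath hT γ.2 u) ≤ supLpPow4 hT t γ :=
  le_ciSup (f := fun u : Icc (0:ℝ) t => lpPow 4 (evalPath hT γ.1 u - evalPath hT γ.2 u))
    (isCompact_range (continuous_lpPow_sub_evalPath hT continuous_const
      continuous_subtype_val)).bddAbove ⟨u, hu⟩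

lemma abs_fst_sub_le_supLpPow4 (hT : 0 ≤ T) {s : ℝ} (hs : 0 ≤ s)
    (γ : PathSpace d T × PathSpace d T) :
    |(evalPath hT γ.1 s).1 - (evalPath hT γ.2 s).1| ≤ supLpPow4 hT s γ ^ (1 / 4 : ℝ) := by
  have := abs_fst_pow_four_le_lpPow (evalPath hT γ.1 s - evalPath hT γ.2 s)
  rw [Prod.fst_sub] at this
  exact le_rpow_quarter_of_pow_four_le (abs_nonneg _)
    (this.trans (le_supLpPow4 hT ⟨hs, le_rfl⟩ γ))

lemma norm_snd_sub_le_supLpPow4 (hT : 0 ≤ T) {s : ℝ} (hs : 0 ≤ s)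
    (γ : PathSpace d T × PathSpace d T) :
    ‖(evalPath hT γ.1 s).2 - (evalPath hT γ.2 s).2‖
      ≤ (d : ℝ) ^ (1 / 4 : ℝ) * supLpPow4 hT s γ ^ (1 / 4 : ℝ) := by
  have := norm_snd_pow_four_le_lpPow (evalPath hT γ.1 s - evalPath hT γ.2 s)
  rw [Prod.snd_sub] at this
  rw [← Real.mul_rpow (Nat.cast_nonneg d) (supLpPow4_nonneg hT s γ)]
  exact le_rpow_quarter_of_pow_four_le (norm_nonneg _)
    (this.trans (mul_le_mul_of_nonneg_left (le_supLpPow4 hT ⟨hs, le_rfl⟩ γ) (Nat.cast_nonneg d)))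

lemma supLpPow4_mono (hT : 0 ≤ T) {s t : ℝ} (hst : s ≤ t) (γ : PathSpace d T × PathSpace d T) :
    supLpPow4 hT s γ ≤ supLpPow4 hT t γ :=
  Real.iSup_le (fun u => le_supLpPow4 hT ⟨u.2.1, u.2.2.trans hst⟩ γ) (supLpPow4_nonneg hT t γ)

section Distance

variable {m m' : Measure (PathSpace d T)}

lemma integrable_min_supLpPow4 (hT : 0 ≤ T) (t : ℝ) (ν : Measure (PathSpace d T × PathSpace d T))
    [IsFiniteMeasure ν] : Integrable (fun γ => min (supLpPow4 hT t γ) 1) ν :=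
  (integrable_const 1).mono' ((continuous_supLpPow4 hT t).min continuous_const).aestronglyMeasurable
    (ae_of_all _ fun γ => by
      rw [Real.norm_of_nonneg (le_min (supLpPow4_nonneg hT t γ) zero_le_one)]
      exact min_le_right _ _)

lemma Dpath_nonneg (hT : 0 ≤ T) (t : ℝ) (m m' : Measure (PathSpace d T)) :
    0 ≤ Dpath hT t 4 m m' := by
  refine Real.sInf_nonneg ?_
  rintro r ⟨ν, -, -, -, rfl⟩
  exact Real.rpow_nonneg (integral_nonneg fun γ => le_min (supLpPow4_nonneg hT t γ) zero_le_one) _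

lemma Dpath_le (hT : 0 ≤ T) (t : ℝ) (ν : Measure (PathSpace d T × PathSpace d T))
    [IsProbabilityMeasure ν] (h₁ : ν.map Prod.fst = m) (h₂ : ν.map Prod.snd = m') :
    Dpath hT t 4 m m' ≤ (∫ γ, min (supLpPow4 hT t γ) 1 ∂ν) ^ (1 / 4 : ℝ) := by
  refine csInf_le ⟨0, ?_⟩ ⟨ν, inferInstance, h₁, h₂, rfl⟩
  rintro r ⟨ν, -, -, -, rfl⟩
  exact Real.rpow_nonneg (integral_nonneg fun γ => le_min (supLpPow4_nonneg hT t γ) zero_le_one) _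

lemma le_mul_Dpath [IsProbabilityMeasure m] [IsProbabilityMeasure m'] (hT : 0 ≤ T) (t : ℝ)
    {A K : ℝ} (hK : 0 ≤ K)
    (h : ∀ ν : Measure (PathSpace d T × PathSpace d T), IsProbabilityMeasure ν →
      ν.map Prod.fst = m → ν.map Prod.snd = m' →
      A ≤ K * (∫ γ, min (supLpPow4 hT t γ) 1 ∂ν) ^ (1 / 4 : ℝ)) :
    A ≤ K * Dpath hT t 4 m m' := by
  have h₁ : (m.prod m').map Prod.fst = m := by simp [Measure.map_fst_prod]
  have h₂ : (m.prod m').map Prod.snd = m' := by simp [Measure.map_snd_prod]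
  obtain rfl | hK := hK.eq_or_lt
  · simpa using h _ inferInstance h₁ h₂
  rw [← div_le_iff₀' hK]
  refine le_csInf ⟨_, m.prod m', inferInstance, h₁, h₂, rfl⟩ ?_
  rintro r ⟨ν, hν, hν₁, hν₂, rfl⟩
  rw [div_le_iff₀' hK]
  exact h ν hν hν₁ hν₂

lemma monotone_Dpath [IsProbabilityMeasure m] [IsProbabilityMeasure m'] (hT : 0 ≤ T) :
    Monotone fun t => Dpath hT t 4 m m' := by
  intro s t hst
  have := le_mul_Dpath (A := Dpath hT s 4 m m') hT t zero_le_one fun ν _ h₁ h₂ => by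
    rw [one_mul]
    refine (Dpath_le hT s ν h₁ h₂).trans (Real.rpow_le_rpow
      (integral_nonneg fun γ => le_min (supLpPow4_nonneg hT s γ) zero_le_one)
      (integral_mono (integrable_min_supLpPow4 hT s ν) (integrable_min_supLpPow4 hT t ν)
        fun γ => min_le_min_right 1 (supLpPow4_mono hT hst γ)) (by norm_num))
  simpa using this

end Distance

variable {σ : ℝ → ℝ} {Cσ : ℝ}

def Gfun (hT : 0 ≤ T) (σ : ℝ → ℝ) (s : ℝ) (x : Euc d) (γ : PathSpace d T) : ℝ :=
  (evalPath hT γ s).1 * σ ⟪(evalPath hT γ s).2, x⟫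

lemma continuous_Gfun (hT : 0 ≤ T) (hσc : Continuous σ) (s : ℝ) (x : Euc d) :
    Continuous (Gfun hT σ s x) := by
  have := continuous_evalPath_left (d := d) hT s
  unfold Gfun
  fun_prop

lemma abs_Gfun_le (hT : 0 ≤ T) (hσ : ∀ z, |σ z| ≤ Cσ) (s : ℝ) (x : Euc d) (γ : PathSpace d T) :
    |Gfun hT σ s x γ| ≤ Cσ * (1 + supMoment4 hT γ) := by
  rw [Gfun, abs_mul, mul_comm]
  exact mul_le_mul (hσ _) (abs_le_one_add_supMoment4 hT γ s) (abs_nonneg _)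
    ((abs_nonneg _).trans (hσ 0))

lemma integrable_Gfun (hT : 0 ≤ T) (hσc : Continuous σ) (hσ : ∀ z, |σ z| ≤ Cσ)
    {m : Measure (PathSpace d T)} [IsFiniteMeasure m] (hm : Integrable (supMoment4 hT) m)
    (s : ℝ) (x : Euc d) : Integrable (Gfun hT σ s x) m :=
  ((integrable_const 1).add hm |>.const_mul Cσ).mono'
    (continuous_Gfun hT hσc s x).aestronglyMeasurable
    (ae_of_all _ fun γ => abs_Gfun_le hT hσ s x γ)

lemma abs_Gpair_le (hT : 0 ≤ T) (hσ : ∀ z, |σ z| ≤ Cσ) {m : Measure (PathSpace d T)}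
    [IsProbabilityMeasure m] (hm : Integrable (supMoment4 hT) m) (s : ℝ) (x : Euc d) :
    |Gpair hT σ m s x| ≤ Cσ * (1 + ∫ γ, supMoment4 hT γ ∂m) := by
  have hb : Integrable (fun γ => Cσ * (1 + supMoment4 hT γ)) m :=
    (integrable_const 1).add hm |>.const_mul Cσ
  calc |Gpair hT σ m s x| ≤ ∫ γ, Cσ * (1 + supMoment4 hT γ) ∂m :=
        norm_integral_le_of_norm_le (f := Gfun hT σ s x) hb
          (ae_of_all _ fun γ => abs_Gfun_le hT hσ s x γ)
    _ = Cσ * (1 + ∫ γ, supMoment4 hT γ ∂m) := by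
        rw [integral_const_mul, integral_add (integrable_const 1) hm]
        simp

lemma continuous_Gpair (hT : 0 ≤ T) (hσc : Continuous σ) (hσ : ∀ z, |σ z| ≤ Cσ)
    {m : Measure (PathSpace d T)} [IsFiniteMeasure m] (hm : Integrable (supMoment4 hT) m) :
    Continuous fun p : ℝ × Euc d => Gpair hT σ m p.1 p.2 := by
  refine continuous_of_dominated (fun p => (continuous_Gfun hT hσc p.1 p.2).aestronglyMeasurable)
    (fun p => ae_of_all _ fun γ => abs_Gfun_le hT hσ p.1 p.2 γ)
    ((integrable_const 1).add hm |>.const_mul Cσ) (ae_of_all _ fun γ => ?_)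
  have := (continuous_evalPath_right hT γ).comp (continuous_fst (X := ℝ) (Y := Euc d))
  fun_prop

lemma abs_Gfun_sub_le_cWeight (hT : 0 ≤ T) (hσ : ∀ z, |σ z| ≤ Cσ) (s : ℝ) (x : Euc d)
    (γ : PathSpace d T × PathSpace d T) :
    |Gfun hT σ s x γ.1 - Gfun hT σ s x γ.2| ≤ Cσ * cWeight hT s γ := by
  have hC : 0 ≤ Cσ := (abs_nonneg _).trans (hσ 0)
  calc |Gfun hT σ s x γ.1 - Gfun hT σ s x γ.2|
      ≤ |(evalPath hT γ.1 s).1| * Cσ + |(evalPath hT γ.2 s).1| * Cσ := by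
        refine (abs_sub _ _).trans ?_
        simp only [Gfun, abs_mul]
        gcongr <;> exact hσ _
    _ ≤ Cσ * cWeight hT s γ := by
        unfold cWeight
        nlinarith

lemma abs_Gfun_sub_le_supLpPow4 (hT : 0 ≤ T) (hσd : Differentiable ℝ σ) (hσ : ∀ z, |σ z| ≤ Cσ)
    (hσ' : ∀ z, |deriv σ z| ≤ Cσ) {s : ℝ} (hs : 0 ≤ s) (x : Euc d)
    (γ : PathSpace d T × PathSpace d T) :
    |Gfun hT σ s x γ.1 - Gfun hT σ s x γ.2|
      ≤ Cσ * (1 + (d : ℝ) ^ (1 / 4 : ℝ)) * (1 + ‖x‖) * cWeight hT s γ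
        * supLpPow4 hT s γ ^ (1 / 4 : ℝ) := by
  have hc := abs_fst_sub_le_supLpPow4 hT hs γ
  have hw := norm_snd_sub_le_supLpPow4 hT hs γ
  set r := supLpPow4 hT s γ ^ (1 / 4 : ℝ)
  set κ : ℝ := (d : ℝ) ^ (1 / 4 : ℝ)
  set c₁ := (evalPath hT γ.1 s).1
  set c₂ := (evalPath hT γ.2 s).1
  set w₁ := (evalPath hT γ.1 s).2
  set w₂ := (evalPath hT γ.2 s).2
  have hC : 0 ≤ Cσ := (abs_nonneg _).trans (hσ 0)
  have hκ : 0 ≤ κ := by positivity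
  have hr : 0 ≤ r := Real.rpow_nonneg (supLpPow4_nonneg hT s γ) _
  have hsplit : Gfun hT σ s x γ.1 - Gfun hT σ s x γ.2
      = (c₁ - c₂) * σ ⟪w₁, x⟫ + c₂ * (σ ⟪w₁, x⟫ - σ ⟪w₂, x⟫) := by
    simp only [Gfun]; ring
  have hweight : 1 + |c₂| * κ * ‖x‖ ≤ (1 + κ) * (1 + ‖x‖) * cWeight hT s γ := by
    unfold cWeight
    nlinarith [abs_nonneg c₁, abs_nonneg c₂, norm_nonneg x, mul_nonneg hκ (norm_nonneg x),
      mul_nonneg (abs_nonneg c₂) (mul_nonneg hκ (norm_nonneg x)),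
      mul_nonneg (abs_nonneg c₁) (mul_nonneg hκ (norm_nonneg x))]
  calc |Gfun hT σ s x γ.1 - Gfun hT σ s x γ.2|
      ≤ |c₁ - c₂| * Cσ + |c₂| * (Cσ * (‖w₁ - w₂‖ * ‖x‖)) := by
        rw [hsplit]
        refine (abs_add_le _ _).trans ?_
        rw [abs_mul, abs_mul]
        gcongr
        · exact hσ _
        · exact abs_comp_inner_sub_le hσd hσ' w₁ w₂ x
    _ ≤ r * Cσ + |c₂| * (Cσ * (κ * r * ‖x‖)) := by gcongr
    _ = Cσ * r * (1 + |c₂| * κ * ‖x‖) := by ring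
    _ ≤ Cσ * r * ((1 + κ) * (1 + ‖x‖) * cWeight hT s γ) := by gcongr
    _ = _ := by ring

/-- The truncation at one in `Dpath` is matched by the crude bound `abs_Gfun_sub_le_cWeight`. -/
lemma abs_Gfun_sub_le (hT : 0 ≤ T) (hσd : Differentiable ℝ σ) (hσ : ∀ z, |σ z| ≤ Cσ)
    (hσ' : ∀ z, |deriv σ z| ≤ Cσ) {s : ℝ} (hs : 0 ≤ s) (x : Euc d)
    (γ : PathSpace d T × PathSpace d T) :
    |Gfun hT σ s x γ.1 - Gfun hT σ s x γ.2|
      ≤ Cσ * (1 + (d : ℝ) ^ (1 / 4 : ℝ)) * (1 + ‖x‖) * cWeight hT s γ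
        * min (supLpPow4 hT s γ) 1 ^ (1 / 4 : ℝ) := by
  rcases le_total (supLpPow4 hT s γ) 1 with hρ | hρ
  · rw [min_eq_left hρ]
    exact abs_Gfun_sub_le_supLpPow4 hT hσd hσ hσ' hs x γ
  · rw [min_eq_right hρ, Real.one_rpow, mul_one]
    refine (abs_Gfun_sub_le_cWeight hT hσ s x γ).trans ?_
    have hC : 0 ≤ Cσ := (abs_nonneg _).trans (hσ 0)
    have hw : 0 ≤ cWeight hT s γ := by unfold cWeight; positivity
    have : 1 ≤ (1 + (d : ℝ) ^ (1 / 4 : ℝ)) * (1 + ‖x‖) :=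
      one_le_mul_of_one_le_of_one_le (le_add_of_nonneg_right (by positivity))
        (le_add_of_nonneg_right (norm_nonneg x))
    calc Cσ * cWeight hT s γ = Cσ * 1 * cWeight hT s γ := by ring
      _ ≤ Cσ * ((1 + (d : ℝ) ^ (1 / 4 : ℝ)) * (1 + ‖x‖)) * cWeight hT s γ := by gcongr
      _ = _ := by ring

section

variable {m₁ m₂ : Measure (PathSpace d T)}

lemma Gpair_sub_Gpair_eq_integral [IsFiniteMeasure m₁] [IsFiniteMeasure m₂] (hT : 0 ≤ T)
    (hσc : Continuous σ) (hσ : ∀ z, |σ z| ≤ Cσ)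
    (hm₁ : Integrable (supMoment4 hT) m₁) (hm₂ : Integrable (supMoment4 hT) m₂) (s : ℝ)
    (x : Euc d) {ν : Measure (PathSpace d T × PathSpace d T)} (h₁ : ν.map Prod.fst = m₁)
    (h₂ : ν.map Prod.snd = m₂) :
    Gpair hT σ m₁ s x - Gpair hT σ m₂ s x = ∫ γ, (Gfun hT σ s x γ.1 - Gfun hT σ s x γ.2) ∂ν := by
  have hG₁ := integrable_Gfun hT hσc hσ hm₁ s x
  have hG₂ := integrable_Gfun hT hσc hσ hm₂ s x
  rw [integral_sub (integrable_comp_of_map_eq measurable_fst h₁ hG₁)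
    (integrable_comp_of_map_eq measurable_snd h₂ hG₂),
    integral_comp_of_map_eq measurable_fst h₁ hG₁.aestronglyMeasurable,
    integral_comp_of_map_eq measurable_snd h₂ hG₂.aestronglyMeasurable]
  rfl

lemma memLp_cWeight (hT : 0 ≤ T) (hm₁ : Integrable (supMoment4 hT) m₁)
    (hm₂ : Integrable (supMoment4 hT) m₂) (s : ℝ) {ν : Measure (PathSpace d T × PathSpace d T)}
    [IsFiniteMeasure ν] (h₁ : ν.map Prod.fst = m₁) (h₂ : ν.map Prod.snd = m₂) :
    MemLp (cWeight hT s) 2 ν := by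
  have hc : Continuous (cWeight (d := d) hT s) := by
    have := continuous_evalPath_left (d := d) hT s
    unfold cWeight
    fun_prop
  refine (memLp_two_iff_integrable_sq hc.aestronglyMeasurable).2
    ((integrable_supMoment4_bound hT hm₁ hm₂ h₁ h₂).mono' (hc.pow 2).aestronglyMeasurable
      (ae_of_all _ fun γ => ?_))
  rw [Real.norm_of_nonneg (sq_nonneg _)]
  exact sq_cWeight_le hT s γ

lemma integral_cWeight_sq_le (hT : 0 ≤ T) (hm₁ : Integrable (supMoment4 hT) m₁)
    (hm₂ : Integrable (supMoment4 hT) m₂) (s : ℝ) {ν : Measure (PathSpace d T × PathSpace d T)}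
    [IsProbabilityMeasure ν] (h₁ : ν.map Prod.fst = m₁) (h₂ : ν.map Prod.snd = m₂) :
    ∫ γ, cWeight hT s γ ^ 2 ∂ν
      ≤ 9 + 3 * ∫ γ, supMoment4 hT γ ∂m₁ + 3 * ∫ γ, supMoment4 hT γ ∂m₂ := by
  have hS₁ := integrable_comp_of_map_eq measurable_fst h₁ hm₁
  have hS₂ := integrable_comp_of_map_eq measurable_snd h₂ hm₂
  refine (integral_mono (memLp_cWeight hT hm₁ hm₂ s h₁ h₂).integrable_sq
    (integrable_supMoment4_bound hT hm₁ hm₂ h₁ h₂) (sq_cWeight_le hT s)).trans_eq ?_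
  rw [integral_add (by fun_prop) (hS₂.const_mul 3), integral_add (integrable_const _)
    (hS₁.const_mul 3), integral_const_mul, integral_const_mul,
    integral_comp_of_map_eq measurable_fst h₁ hm₁.aestronglyMeasurable,
    integral_comp_of_map_eq measurable_snd h₂ hm₂.aestronglyMeasurable]
  simp

lemma abs_Gpair_sub_le_of_coupling [IsFiniteMeasure m₁] [IsFiniteMeasure m₂] (hT : 0 ≤ T)
    (hσd : Differentiable ℝ σ) (hσ : ∀ z, |σ z| ≤ Cσ) (hσ' : ∀ z, |deriv σ z| ≤ Cσ)
    (hm₁ : Integrable (supMoment4 hT) m₁) (hm₂ : Integrable (supMoment4 hT) m₂)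
    {s : ℝ} (hs : 0 ≤ s) (x : Euc d) (ν : Measure (PathSpace d T × PathSpace d T))
    [IsProbabilityMeasure ν] (h₁ : ν.map Prod.fst = m₁) (h₂ : ν.map Prod.snd = m₂) :
    |Gpair hT σ m₁ s x - Gpair hT σ m₂ s x|
      ≤ Cσ * (1 + (d : ℝ) ^ (1 / 4 : ℝ)) * (1 + ‖x‖)
        * √(9 + 3 * ∫ γ, supMoment4 hT γ ∂m₁ + 3 * ∫ γ, supMoment4 hT γ ∂m₂)
        * (∫ γ, min (supLpPow4 hT s γ) 1 ∂ν) ^ (1 / 4 : ℝ) := by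
  set L := Cσ * (1 + (d : ℝ) ^ (1 / 4 : ℝ)) * (1 + ‖x‖)
  set e := fun γ => min (supLpPow4 hT s γ) 1
  have hL : 0 ≤ L := by
    have := (abs_nonneg _).trans (hσ 0)
    positivity
  have he0 : 0 ≤ e := fun γ => le_min (supLpPow4_nonneg hT s γ) zero_le_one
  have hw0 : 0 ≤ cWeight (d := d) hT s := fun γ => by unfold cWeight; positivity
  have hw := memLp_cWeight hT hm₁ hm₂ s h₁ h₂
  have hbound : Integrable (fun γ => L * (e γ ^ (1 / 4 : ℝ) * cWeight hT s γ)) ν := by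
    refine ((hw.integrable one_le_two).const_mul L).mono' ?_ (ae_of_all _ fun γ => ?_)
    · have he : Continuous fun γ => e γ ^ (1 / 4 : ℝ) :=
        ((continuous_supLpPow4 hT s).min continuous_const).rpow_const fun _ => Or.inr (by norm_num)
      exact (he.aestronglyMeasurable.mul hw.aestronglyMeasurable).const_mul L
    · rw [Real.norm_of_nonneg (mul_nonneg hL (mul_nonneg (Real.rpow_nonneg (he0 γ) _) (hw0 γ)))]
      gcongr
      exact mul_le_of_le_one_left (hw0 γ)
        (Real.rpow_le_one (he0 γ) (min_le_right _ _) (by norm_num))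
  calc |Gpair hT σ m₁ s x - Gpair hT σ m₂ s x|
      ≤ ∫ γ, L * (e γ ^ (1 / 4 : ℝ) * cWeight hT s γ) ∂ν := by
        rw [Gpair_sub_Gpair_eq_integral hT hσd.continuous hσ hm₁ hm₂ s x h₁ h₂]
        exact norm_integral_le_of_norm_le (f := fun γ => Gfun hT σ s x γ.1 - Gfun hT σ s x γ.2)
          hbound (ae_of_all _ fun γ => (abs_Gfun_sub_le hT hσd hσ hσ' hs x γ).trans_eq (by ring))
    _ ≤ L * ((∫ γ, e γ ∂ν) ^ (1 / 4 : ℝ) * √(∫ γ, cWeight hT s γ ^ 2 ∂ν)) := by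
        rw [integral_const_mul]
        exact mul_le_mul_of_nonneg_left (integral_rpow_quarter_mul_le he0
          (integrable_min_supLpPow4 hT s ν) hw0 hw) hL
    _ ≤ _ := by
        rw [mul_comm ((∫ γ, e γ ∂ν) ^ (1 / 4 : ℝ)), ← mul_assoc]
        gcongr
        · exact Real.rpow_nonneg (integral_nonneg he0) _
        · exact integral_cWeight_sq_le hT hm₁ hm₂ s h₁ h₂

lemma exists_abs_Gpair_sub_le_Dpath [IsProbabilityMeasure m₁] [IsProbabilityMeasure m₂]
    (hT : 0 ≤ T) (hσd : Differentiable ℝ σ)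
    (hσ : ∀ z, |σ z| ≤ Cσ) (hσ' : ∀ z, |deriv σ z| ≤ Cσ)
    (hm₁ : Integrable (supMoment4 hT) m₁) (hm₂ : Integrable (supMoment4 hT) m₂) :
    ∃ K, 0 ≤ K ∧ ∀ s, 0 ≤ s → ∀ x : Euc d,
      |Gpair hT σ m₁ s x - Gpair hT σ m₂ s x| ≤ K * (1 + ‖x‖) * Dpath hT s 4 m₁ m₂ := by
  have hC : 0 ≤ Cσ := (abs_nonneg _).trans (hσ 0)
  refine ⟨Cσ * (1 + (d : ℝ) ^ (1 / 4 : ℝ))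
    * √(9 + 3 * ∫ γ, supMoment4 hT γ ∂m₁ + 3 * ∫ γ, supMoment4 hT γ ∂m₂), by positivity,
    fun s hs x => le_mul_Dpath hT s (by positivity) fun ν _ h₁ h₂ => ?_⟩
  refine (abs_Gpair_sub_le_of_coupling hT hσd hσ hσ' hm₁ hm₂ hs x ν h₁ h₂).trans_eq ?_
  ring

end

lemma abs_drift_sub_le {E : Type*} [NormedAddCommGroup E] [InnerProductSpace ℝ E]
    (hσd : Differentiable ℝ σ) (hσ : ∀ z, |σ z| ≤ Cσ) (hσ' : ∀ z, |deriv σ z| ≤ Cσ)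
    {α y g₁ g₂ B K D : ℝ} {w₁ w₂ x : E} (hB : |g₂| ≤ B) (hK : 0 ≤ K) (hD : 0 ≤ D)
    (hg : |g₁ - g₂| ≤ K * (1 + ‖x‖) * D) :
    |α * (y - g₂) * σ ⟪w₂, x⟫ - α * (y - g₁) * σ ⟪w₁, x⟫|
      ≤ |α| * Cσ * (1 + B + K) * (‖w₂ - w₁‖ + D) * ((1 + |y|) * (1 + ‖x‖)) := by
  have hC : 0 ≤ Cσ := (abs_nonneg _).trans (hσ 0)
  have hB0 : 0 ≤ B := (abs_nonneg _).trans hB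
  have hσw := abs_comp_inner_sub_le hσd hσ' w₂ w₁ x
  have hy : |y - g₂| ≤ |y| + B := (abs_sub _ _).trans (by gcongr)
  set W := ‖w₂ - w₁‖
  have hW : 0 ≤ W := norm_nonneg _
  calc |α * (y - g₂) * σ ⟪w₂, x⟫ - α * (y - g₁) * σ ⟪w₁, x⟫|
      = |α| * |(y - g₂) * (σ ⟪w₂, x⟫ - σ ⟪w₁, x⟫) + (g₁ - g₂) * σ ⟪w₁, x⟫| := by
        rw [← abs_mul]; ring_nf
    _ ≤ |α| * ((|y| + B) * (Cσ * (W * ‖x‖)) + K * (1 + ‖x‖) * D * Cσ) := by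
        gcongr
        refine (abs_add_le _ _).trans ?_
        rw [abs_mul, abs_mul]
        gcongr
        exact hσ _
    _ = |α| * Cσ * ((|y| + B) * W * ‖x‖ + K * (1 + ‖x‖) * D) := by ring
    _ ≤ |α| * Cσ * ((1 + B) * (1 + |y|) * (W + D) * (1 + ‖x‖)
          + K * (1 + |y|) * (W + D) * (1 + ‖x‖)) := by
        have hyB : |y| + B ≤ (1 + B) * (1 + |y|) := by nlinarith [mul_nonneg hB0 (abs_nonneg y)]
        have h1y : 1 ≤ 1 + |y| := le_add_of_nonneg_right (abs_nonneg y)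
        have first : (|y| + B) * W * ‖x‖ ≤ (1 + B) * (1 + |y|) * (W + D) * (1 + ‖x‖) := by
          gcongr <;> linarith
        have second : K * 1 * D * (1 + ‖x‖) ≤ K * (1 + |y|) * (W + D) * (1 + ‖x‖) := by
          gcongr; linarith
        refine mul_le_mul_of_nonneg_left (add_le_add first (le_of_eq_of_le ?_ second))
          (by positivity)
        ring
    _ = _ := by ring

variable {π : Measure (Euc d × ℝ)}

def cDrift (hT : 0 ≤ T) (α : ℝ) (σ : ℝ → ℝ) (π : Measure (Euc d × ℝ))
    (m : Measure (PathSpace d T)) (γ : PathSpace d T) (s : ℝ) : ℝ :=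
  ∫ pt, α * (pt.2 - Gpair hT σ m s pt.1) * σ ⟪(evalPath hT γ s).2, pt.1⟫ ∂π

lemma abs_cDrift_integrand_le (hT : 0 ≤ T) (hσ : ∀ z, |σ z| ≤ Cσ) {m : Measure (PathSpace d T)}
    [IsProbabilityMeasure m] (hm : Integrable (supMoment4 hT) m) (α : ℝ) (γ : PathSpace d T)
    (s : ℝ) (pt : Euc d × ℝ) :
    |α * (pt.2 - Gpair hT σ m s pt.1) * σ ⟪(evalPath hT γ s).2, pt.1⟫|
      ≤ |α| * Cσ * (1 + Cσ * (1 + ∫ γ, supMoment4 hT γ ∂m)) * ((1 + |pt.2|) * (1 + ‖pt.1‖)) := by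
  have hC : 0 ≤ Cσ := (abs_nonneg _).trans (hσ 0)
  set B := Cσ * (1 + ∫ γ, supMoment4 hT γ ∂m)
  have hB : 0 ≤ B := (abs_nonneg _).trans (abs_Gpair_le hT hσ hm s pt.1)
  have hy : |pt.2 - Gpair hT σ m s pt.1| ≤ |pt.2| + B :=
    (abs_sub _ _).trans (by gcongr; exact abs_Gpair_le hT hσ hm s pt.1)
  have hyΨ : |pt.2| + B ≤ (1 + B) * ((1 + |pt.2|) * (1 + ‖pt.1‖)) := by
    nlinarith [abs_nonneg pt.2, norm_nonneg pt.1, mul_nonneg hB (abs_nonneg pt.2),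
      mul_nonneg (add_nonneg zero_le_one hB)
        (mul_nonneg (add_nonneg zero_le_one (abs_nonneg pt.2)) (norm_nonneg pt.1))]
  calc |α * (pt.2 - Gpair hT σ m s pt.1) * σ ⟪(evalPath hT γ s).2, pt.1⟫|
      = |α| * (|pt.2 - Gpair hT σ m s pt.1| * |σ ⟪(evalPath hT γ s).2, pt.1⟫|) := by
        rw [abs_mul, abs_mul, mul_assoc]
    _ ≤ |α| * ((1 + B) * ((1 + |pt.2|) * (1 + ‖pt.1‖)) * Cσ) := by
        gcongr
        · exact hy.trans hyΨ
        · exact hσ _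
    _ = _ := by ring

lemma continuous_cDrift_integrand (hT : 0 ≤ T) (hσc : Continuous σ) (hσ : ∀ z, |σ z| ≤ Cσ)
    {m : Measure (PathSpace d T)} [IsFiniteMeasure m] (hm : Integrable (supMoment4 hT) m)
    (α : ℝ) (γ : PathSpace d T) (s : ℝ) :
    Continuous fun pt : Euc d × ℝ =>
      α * (pt.2 - Gpair hT σ m s pt.1) * σ ⟪(evalPath hT γ s).2, pt.1⟫ := by
  have : Continuous fun x => Gpair hT σ m s x :=
    (continuous_Gpair hT hσc hσ hm).comp (continuous_const.prodMk continuous_id)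
  fun_prop

lemma integrable_cDrift_integrand (hT : 0 ≤ T) (hσc : Continuous σ) (hσ : ∀ z, |σ z| ≤ Cσ)
    {m : Measure (PathSpace d T)} [IsProbabilityMeasure m] (hm : Integrable (supMoment4 hT) m)
    (hπ : Integrable (fun pt : Euc d × ℝ => (1 + |pt.2|) * (1 + ‖pt.1‖)) π)
    (α : ℝ) (γ : PathSpace d T) (s : ℝ) :
    Integrable (fun pt : Euc d × ℝ =>
      α * (pt.2 - Gpair hT σ m s pt.1) * σ ⟪(evalPath hT γ s).2, pt.1⟫) π :=
  (hπ.const_mul _).mono' (continuous_cDrift_integrand hT hσc hσ hm α γ s).aestronglyMeasurable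
    (ae_of_all _ (abs_cDrift_integrand_le hT hσ hm α γ s))

lemma continuous_cDrift (hT : 0 ≤ T) (hσc : Continuous σ) (hσ : ∀ z, |σ z| ≤ Cσ)
    {m : Measure (PathSpace d T)} [IsProbabilityMeasure m] (hm : Integrable (supMoment4 hT) m)
    (hπ : Integrable (fun pt : Euc d × ℝ => (1 + |pt.2|) * (1 + ‖pt.1‖)) π)
    (α : ℝ) (γ : PathSpace d T) : Continuous (cDrift hT α σ π m γ) := by
  refine continuous_of_dominated
    (fun s => (continuous_cDrift_integrand hT hσc hσ hm α γ s).aestronglyMeasurable)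
    (fun s => ae_of_all _ (abs_cDrift_integrand_le hT hσ hm α γ s)) (hπ.const_mul _)
    (ae_of_all _ fun pt => ?_)
  have : Continuous fun s => Gpair hT σ m s pt.1 :=
    (continuous_Gpair hT hσc hσ hm).comp (continuous_id.prodMk continuous_const)
  have := continuous_evalPath_right hT γ
  fun_prop

lemma exists_abs_cDrift_sub_le (hT : 0 ≤ T) (hσd : Differentiable ℝ σ) (hσ : ∀ z, |σ z| ≤ Cσ)
    (hσ' : ∀ z, |deriv σ z| ≤ Cσ) {m₁ m₂ : Measure (PathSpace d T)} [IsProbabilityMeasure m₁]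
    [IsProbabilityMeasure m₂] (hm₁ : Integrable (supMoment4 hT) m₁)
    (hm₂ : Integrable (supMoment4 hT) m₂)
    (hπ : Integrable (fun pt : Euc d × ℝ => (1 + |pt.2|) * (1 + ‖pt.1‖)) π) (α : ℝ) :
    ∃ C, ∀ γ₁ γ₂ : PathSpace d T, ∀ s, 0 ≤ s →
      |cDrift hT α σ π m₂ γ₂ s - cDrift hT α σ π m₁ γ₁ s|
        ≤ C * (‖(evalPath hT γ₂ s).2 - (evalPath hT γ₁ s).2‖ + Dpath hT s 4 m₁ m₂) := by
  obtain ⟨K, hK, hG⟩ := exists_abs_Gpair_sub_le_Dpath hT hσd hσ hσ' hm₁ hm₂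
  set C₀ := |α| * Cσ * (1 + Cσ * (1 + ∫ γ, supMoment4 hT γ ∂m₂) + K)
  refine ⟨C₀ * ∫ pt, (1 + |pt.2|) * (1 + ‖pt.1‖) ∂π, fun γ₁ γ₂ s hs => ?_⟩
  set W := ‖(evalPath hT γ₂ s).2 - (evalPath hT γ₁ s).2‖
  calc |cDrift hT α σ π m₂ γ₂ s - cDrift hT α σ π m₁ γ₁ s|
      ≤ ∫ pt, C₀ * (W + Dpath hT s 4 m₁ m₂) * ((1 + |pt.2|) * (1 + ‖pt.1‖)) ∂π := by
        rw [cDrift, cDrift,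
          ← integral_sub (integrable_cDrift_integrand hT hσd.continuous hσ hm₂ hπ α γ₂ s)
            (integrable_cDrift_integrand hT hσd.continuous hσ hm₁ hπ α γ₁ s)]
        refine norm_integral_le_of_norm_le (G := ℝ) (hπ.const_mul _) (ae_of_all _ fun pt => ?_)
        exact abs_drift_sub_le hσd hσ hσ' (abs_Gpair_le hT hσ hm₂ s pt.1) hK
          (Dpath_nonneg hT s m₁ m₂) (hG s hs pt.1)
    _ = _ := by rw [integral_const_mul]; ring

lemma integrable_one_add_abs_mul_one_add_norm [IsFiniteMeasure π]
    (hπ : Integrable (fun pt : Euc d × ℝ => ‖pt.1‖ ^ 4 + |pt.2| ^ 4) π) :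
    Integrable (fun pt : Euc d × ℝ => (1 + |pt.2|) * (1 + ‖pt.1‖)) π := by
  refine ((integrable_const 4).add hπ).mono' (by fun_prop) (ae_of_all _ fun pt => ?_)
  have hx := norm_nonneg pt.1
  have hy := abs_nonneg pt.2
  rw [Real.norm_of_nonneg (by positivity), Pi.add_apply]
  nlinarith [sq_nonneg (‖pt.1‖ - |pt.2|), sq_nonneg (1 - ‖pt.1‖), sq_nonneg (1 - |pt.2|),
    sq_nonneg (1 - ‖pt.1‖ ^ 2), sq_nonneg (1 - |pt.2| ^ 2)]

end

end FrozenSystem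

open FrozenSystem in
theorem frozen_system_c_difference_bound_general
    (d : ℕ) (α T : ℝ) (hT : 0 < T)
    (σ : ℝ → ℝ) (hσ : ContDiff ℝ 2 σ)
    (Cσ : ℝ) (hCσ : ∀ z : ℝ, |σ z| ≤ Cσ ∧ |deriv σ z| ≤ Cσ ∧ |deriv (deriv σ) z| ≤ Cσ)
    (π : Measure (Euc d × ℝ)) [IsProbabilityMeasure π]
    (hπmom : Integrable (fun p : Euc d × ℝ => ‖p.1‖ ^ 4 + |p.2| ^ 4) π)
    (μ0 : Measure (ℝ × Euc d))
    {Ω : Type} [MeasureSpace Ω]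
    (m₁ m₂ : Measure (PathSpace d T)) [IsProbabilityMeasure m₁] [IsProbabilityMeasure m₂]
    (hm₁ : Integrable (fun γ => ⨆ t : Set.Icc (0:ℝ) T,
      (|(evalPath hT.le γ (t : ℝ)).1| ^ 4 + ‖(evalPath hT.le γ (t : ℝ)).2‖ ^ 4)) m₁)
    (hm₂ : Integrable (fun γ => ⨆ t : Set.Icc (0:ℝ) T,
      (|(evalPath hT.le γ (t : ℝ)).1| ^ 4 + ‖(evalPath hT.le γ (t : ℝ)).2‖ ^ 4)) m₂)
    (ξ₁ ξ₂ : Ω → PathSpace d T)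
    (hξ₁ : IsFrozenSolution hT.le α σ π μ0 m₁ ξ₁)
    (hξ₂ : IsFrozenSolution hT.le α σ π μ0 m₂ ξ₂)
    (hsame0 : ∀ ω, evalPath hT.le (ξ₁ ω) 0 = evalPath hT.le (ξ₂ ω) 0) :
    ∃ C : ℝ, ∀ t ∈ Set.Icc (0:ℝ) T, ∀ᵐ ω ∂ℙ,
      |(evalPath hT.le (ξ₂ ω) t).1 - (evalPath hT.le (ξ₁ ω) t).1|
        ≤ C * ∫ s in (0:ℝ)..t,
          (‖(evalPath hT.le (ξ₂ ω) s).2 - (evalPath hT.le (ξ₁ ω) s).2‖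
            + Dpath hT.le s 4 m₁ m₂) := by
  have hσd : Differentiable ℝ σ := hσ.differentiable (by norm_num)
  have hσb : ∀ z, |σ z| ≤ Cσ := fun z => (hCσ z).1
  have hπ := integrable_one_add_abs_mul_one_add_norm hπmom
  obtain ⟨C, hC⟩ := exists_abs_cDrift_sub_le hT.le hσd hσb (fun z => (hCσ z).2.1) hm₁ hm₂ hπ α
  refine ⟨C, fun t ht => ae_of_all _ fun ω => ?_⟩
  have hc₁ : (evalPath hT.le (ξ₁ ω) t).1 = (evalPath hT.le (ξ₁ ω) 0).1
      + ∫ s in (0:ℝ)..t, cDrift hT.le α σ π m₁ (ξ₁ ω) s := (hξ₁.2.2 ω t ht).1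
  have hc₂ : (evalPath hT.le (ξ₂ ω) t).1 = (evalPath hT.le (ξ₂ ω) 0).1
      + ∫ s in (0:ℝ)..t, cDrift hT.le α σ π m₂ (ξ₂ ω) s := (hξ₂.2.2 ω t ht).1
  have hw : Continuous fun s => ‖(evalPath hT.le (ξ₂ ω) s).2 - (evalPath hT.le (ξ₁ ω) s).2‖ := by
    have := continuous_evalPath_right hT.le (ξ₁ ω)
    have := continuous_evalPath_right hT.le (ξ₂ ω)
    fun_prop
  rw [hc₁, hc₂, hsame0 ω, add_sub_add_left_eq_sub]
  exact abs_intervalIntegral_sub_le ht.1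
    ((continuous_cDrift hT.le hσd.continuous hσb hm₂ hπ α _).intervalIntegrable _ _)
    ((continuous_cDrift hT.le hσd.continuous hσb hm₁ hπ α _).intervalIntegrable _ _)
    ((hw.intervalIntegrable _ _).add (monotone_Dpath hT.le).intervalIntegrable)
    fun s hs => hC _ _ s hs.1

/-- pathwise Gronwall-type bound for the `c`-difference of solutions
of the frozen system with inputs `m¹, m²` and the same initial condition:
`|c_t² − c_t¹| ≤ C ∫₀ᵗ [ ‖w_s²−w_s¹‖ + D_{s,4}(m¹,m²) ] ds`. -/
theorem frozen_system_c_difference_bound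
    (d : ℕ) (α T : ℝ) (hα : 0 < α) (hT : 0 < T)
    (σ : ℝ → ℝ) (hσ : ContDiff ℝ 2 σ)
    (Cσ : ℝ) (hCσ : ∀ z : ℝ, |σ z| ≤ Cσ ∧ |deriv σ z| ≤ Cσ ∧ |deriv (deriv σ) z| ≤ Cσ)
    (π : Measure (Euc d × ℝ)) [IsProbabilityMeasure π]
    (hπmom : Integrable (fun p : Euc d × ℝ => ‖p.1‖ ^ 4 + |p.2| ^ 4) π)
    (μ0 : Measure (ℝ × Euc d)) [IsProbabilityMeasure μ0]
    (q C0 : ℝ) (hq : 0 < q)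
    (hμ0c : ∫ z, Real.exp (q * |z.1|) ∂μ0 ≤ C0)
    (hμ0w : ∫ z, ‖z.2‖ ^ 4 ∂μ0 ≤ C0)
    {Ω : Type} [MeasureSpace Ω] [IsProbabilityMeasure (ℙ : Measure Ω)]
    (m₁ m₂ : Measure (PathSpace d T)) [IsProbabilityMeasure m₁] [IsProbabilityMeasure m₂]
    (hm₁ : Integrable (fun γ => ⨆ t : Set.Icc (0:ℝ) T,
      (|(evalPath hT.le γ (t : ℝ)).1| ^ 4 + ‖(evalPath hT.le γ (t : ℝ)).2‖ ^ 4)) m₁)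
    (hm₂ : Integrable (fun γ => ⨆ t : Set.Icc (0:ℝ) T,
      (|(evalPath hT.le γ (t : ℝ)).1| ^ 4 + ‖(evalPath hT.le γ (t : ℝ)).2‖ ^ 4)) m₂)
    (ξ₁ ξ₂ : Ω → PathSpace d T)
    (hξ₁ : IsFrozenSolution hT.le α σ π μ0 m₁ ξ₁)
    (hξ₂ : IsFrozenSolution hT.le α σ π μ0 m₂ ξ₂)
    (hsame0 : ∀ ω, evalPath hT.le (ξ₁ ω) 0 = evalPath hT.le (ξ₂ ω) 0) :
    ∃ C : ℝ, ∀ t ∈ Set.Icc (0:ℝ) T, ∀ᵐ ω ∂ℙ,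
      |(evalPath hT.le (ξ₂ ω) t).1 - (evalPath hT.le (ξ₁ ω) t).1|
        ≤ C * ∫ s in (0:ℝ)..t,
          (‖(evalPath hT.le (ξ₂ ω) s).2 - (evalPath hT.le (ξ₁ ω) s).2‖
            + Dpath hT.le s 4 m₁ m₂) :=
  frozen_system_c_difference_bound_general d α T hT σ hσ Cσ hCσ π hπmom μ0 m₁ m₂ hm₁ hm₂ ξ₁ ξ₂ hξ₁
    hξ₂ hsame0
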